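/- Under the hypotheses that the Hermitian part of Z_SS is positive semidefinite and Re(z_s) = R_0 > 0 for all s, the coupling coefficient φ_TR := z_TR - z_TS Z_SE^{-1} z_SR satisfies |φ_TR| ≤ |z_TR| + (1/R_0)‖z_TS‖‖z_SR‖. -/

import Mathlib

/-!
The Hermitian part of `Z_SS` being positive semidefinite and every load having resistance `R₀`
make `Z_SE` coercive: `Re (x* Z_SE x) ≥ R₀ ‖x‖²`. By Cauchy–Schwarz this gives
`R₀ ‖x‖ ≤ ‖Z_SE x‖`, so `Z_SE` is invertible with `‖Z_SE⁻¹ v‖ ≤ ‖v‖ / R₀`; one more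
Cauchy–Schwarz bounds `|z_TS Z_SE⁻¹ z_SR|`, and the triangle inequality finishes.
-/

open Matrix
open scoped ComplexOrder

section InnerProductSpace

variable {𝕜 E : Type*} [RCLike 𝕜] [NormedAddCommGroup E] [InnerProductSpace 𝕜 E]

theorem mul_norm_le_norm_of_le_re_inner {x y : E} {c : ℝ}
    (h : c * ‖x‖ ^ 2 ≤ RCLike.re (inner 𝕜 x y)) : c * ‖x‖ ≤ ‖y‖ := by
  rcases (norm_nonneg x).eq_or_lt with hx | hx
  · simp [← hx]
  · refine le_of_mul_le_mul_right ?_ hx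
    calc c * ‖x‖ * ‖x‖ = c * ‖x‖ ^ 2 := by ring
      _ ≤ RCLike.re (inner 𝕜 x y) := h
      _ ≤ ‖x‖ * ‖y‖ := re_inner_le_norm x y
      _ = ‖y‖ * ‖x‖ := mul_comm _ _

end InnerProductSpace

namespace Matrix

variable {𝕜 n : Type*} [RCLike 𝕜] [Fintype n]

theorem norm_dotProduct_le (u v : n → 𝕜) :
    ‖u ⬝ᵥ v‖ ≤ ‖WithLp.toLp 2 u‖ * ‖WithLp.toLp 2 v‖ := by
  have hstar : ‖WithLp.toLp 2 (star u)‖ = ‖WithLp.toLp 2 u‖ := by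
    simp [EuclideanSpace.norm_eq]
  calc ‖u ⬝ᵥ v‖ = ‖inner 𝕜 (WithLp.toLp 2 (star u)) (WithLp.toLp 2 v)‖ := by
        rw [EuclideanSpace.inner_toLp_toLp, star_star, dotProduct_comm]
    _ ≤ ‖WithLp.toLp 2 u‖ * ‖WithLp.toLp 2 v‖ := hstar ▸ norm_inner_le_norm _ _

theorem star_dotProduct_conjTranspose_mulVec (A : Matrix n n 𝕜) (x : n → 𝕜) :
    star x ⬝ᵥ (Aᴴ *ᵥ x) = star (star x ⬝ᵥ (A *ᵥ x)) := by
  rw [dotProduct_mulVec, ← star_mulVec, star_dotProduct]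

theorem star_dotProduct_hermitianPart_mulVec (A : Matrix n n 𝕜) (x : n → 𝕜) :
    star x ⬝ᵥ ((((1 : 𝕜) / 2) • (A + Aᴴ)) *ᵥ x) = RCLike.re (star x ⬝ᵥ (A *ᵥ x)) := by
  rw [smul_mulVec, dotProduct_smul, add_mulVec, dotProduct_add,
    star_dotProduct_conjTranspose_mulVec, RCLike.star_def, RCLike.add_conj, smul_eq_mul]
  ring

theorem re_star_dotProduct_mulVec_nonneg {A : Matrix n n 𝕜}
    (hA : (((1 : 𝕜) / 2) • (A + Aᴴ)).PosSemidef) (x : n → 𝕜) :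
    0 ≤ RCLike.re (star x ⬝ᵥ (A *ᵥ x)) := by
  have h := hA.dotProduct_mulVec_nonneg x
  rwa [star_dotProduct_hermitianPart_mulVec, RCLike.ofReal_nonneg] at h

variable [DecidableEq n]

theorem re_star_dotProduct_diagonal_mulVec (d x : n → 𝕜) :
    RCLike.re (star x ⬝ᵥ (diagonal d *ᵥ x)) = ∑ i, RCLike.re (d i) * ‖x i‖ ^ 2 := by
  simp only [dotProduct, Pi.star_apply, map_sum]
  refine Finset.sum_congr rfl fun i _ => ?_
  rw [mulVec_diagonal, mul_left_comm, RCLike.star_def, RCLike.conj_mul, ← RCLike.ofReal_pow,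
    RCLike.re_mul_ofReal]

theorem mul_norm_sq_le_re_star_dotProduct_add_diagonal_mulVec {A : Matrix n n 𝕜}
    (hA : (((1 : 𝕜) / 2) • (A + Aᴴ)).PosSemidef) {d : n → 𝕜} {c : ℝ}
    (hd : ∀ i, c ≤ RCLike.re (d i)) (x : n → 𝕜) :
    c * ‖WithLp.toLp 2 x‖ ^ 2 ≤ RCLike.re (star x ⬝ᵥ ((A + diagonal d) *ᵥ x)) := by
  rw [add_mulVec, dotProduct_add, map_add, re_star_dotProduct_diagonal_mulVec,
    EuclideanSpace.norm_sq_eq, Finset.mul_sum]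
  have hdiag : ∑ i, c * ‖x i‖ ^ 2 ≤ ∑ i, RCLike.re (d i) * ‖x i‖ ^ 2 :=
    Finset.sum_le_sum fun i _ => by gcongr; exact hd i
  simpa using add_le_add (re_star_dotProduct_mulVec_nonneg hA x) hdiag

theorem mul_norm_le_norm_add_diagonal_mulVec {A : Matrix n n 𝕜}
    (hA : (((1 : 𝕜) / 2) • (A + Aᴴ)).PosSemidef) {d : n → 𝕜} {c : ℝ}
    (hd : ∀ i, c ≤ RCLike.re (d i)) (x : n → 𝕜) :
    c * ‖WithLp.toLp 2 x‖ ≤ ‖WithLp.toLp 2 ((A + diagonal d) *ᵥ x)‖ := by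
  refine mul_norm_le_norm_of_le_re_inner (𝕜 := 𝕜) ?_
  rw [EuclideanSpace.inner_toLp_toLp, dotProduct_comm]
  exact mul_norm_sq_le_re_star_dotProduct_add_diagonal_mulVec hA hd x

theorem norm_inv_mulVec_le {M : Matrix n n 𝕜} {c : ℝ} (hc : 0 < c)
    (hM : ∀ x, c * ‖WithLp.toLp 2 x‖ ≤ ‖WithLp.toLp 2 (M *ᵥ x)‖) (v : n → 𝕜) :
    ‖WithLp.toLp 2 (M⁻¹ *ᵥ v)‖ ≤ ‖WithLp.toLp 2 v‖ / c := by
  have hinj : Function.Injective M.mulVec := fun x y hxy => by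
    have h := hM (x - y)
    rw [mulVec_sub, hxy, sub_self, WithLp.toLp_zero, norm_zero] at h
    have : ‖WithLp.toLp 2 (x - y)‖ = 0 :=
      le_antisymm (nonpos_of_mul_nonpos_right h hc) (norm_nonneg _)
    simpa [sub_eq_zero] using this
  have hdet : IsUnit M.det := (isUnit_iff_isUnit_det M).1 (mulVec_injective_iff_isUnit.1 hinj)
  rw [le_div_iff₀' hc]
  simpa [mulVec_mulVec, mul_nonsing_inv M hdet] using hM (M⁻¹ *ᵥ v)

end Matrix

/-- Under passivity of `Z_SS` and loads with real part `R₀ > 0`, the coupling coefficient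
`φ_TR = z_TR - z_TS Z_SE⁻¹ z_SR` satisfies `|φ_TR| ≤ |z_TR| + (1/R₀)‖z_TS‖‖z_SR‖`. -/
theorem phiTR_bound (N : ℕ) (ZSS : Matrix (Fin N) (Fin N) ℂ)
    (hZSS : (((1 : ℂ) / 2) • (ZSS + ZSSᴴ)).PosSemidef)
    (zRIS : Fin N → ℂ) (R₀ : ℝ) (hR₀ : 0 < R₀) (hz : ∀ s, (zRIS s).re = R₀)
    (zTR : ℂ) (zTS zSR : Fin N → ℂ) :
    ‖zTR - zTS ⬝ᵥ ((ZSS + Matrix.diagonal zRIS)⁻¹ *ᵥ zSR)‖ ≤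
      ‖zTR‖ + (1 / R₀) *
        (‖(EuclideanSpace.equiv (Fin N) ℂ).symm zTS‖ *
          ‖(EuclideanSpace.equiv (Fin N) ℂ).symm zSR‖) := by
  change _ ≤ ‖zTR‖ + 1 / R₀ * (‖WithLp.toLp 2 zTS‖ * ‖WithLp.toLp 2 zSR‖)
  have hcoercive := mul_norm_le_norm_add_diagonal_mulVec hZSS (c := R₀) (fun s => (hz s).ge)
  calc ‖zTR - zTS ⬝ᵥ ((ZSS + diagonal zRIS)⁻¹ *ᵥ zSR)‖
      ≤ ‖zTR‖ + ‖zTS ⬝ᵥ ((ZSS + diagonal zRIS)⁻¹ *ᵥ zSR)‖ := norm_sub_le _ _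
    _ ≤ ‖zTR‖ + ‖WithLp.toLp 2 zTS‖ * (‖WithLp.toLp 2 zSR‖ / R₀) := by
        gcongr
        exact (norm_dotProduct_le _ _).trans
          (by gcongr; exact norm_inv_mulVec_le hR₀ hcoercive zSR)
    _ = _ := by ring
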